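/- Let μ, ν be σ-finite lower continuous monotone measures with ν null-additive, witnessed by Uₙ ↑ U with μ(Uₙ), ν(Uₙ) < ∞. If (μ, ν) has the decomposition property w.r.t. {A_α}_{α∈ℚ≥0} and lim_{α→∞} max(μ(A_α ∩ Uₙ), ν(A_α ∩ Uₙ)) = 0 for each n, then there exists a nonnegative measurable function f, finite ν-a.e., such that μ(A) = ∫_A f dν for all measurable A; moreover f is unique up to ν-null sets. -/

import Mathlib

/-!
Take `f x = sup {α | x ∈ A α}`, so that `A β ⊆ {f ≥ t} ⊆ A α` for `α < t ≤ β`, and fix `S` of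
finite measure. Over `[α, β]`, both the increase of `α ↦ ∫₀^α ν({f ≥ t} ∩ S) dt` and (by the
decomposition inequalities) the decrease of `α ↦ μ(S ∩ A α) - α ν(S ∩ A α)` lie between
`(β - α) ν(S ∩ A β)` and `(β - α) ν(S ∩ A α)`. Summing over a mesh of width `1/k` telescopes the
gaps `ν(S ∩ A α) - ν(S ∩ A β)`, so the sum of the two functions is constant. As `α → ∞` the
tails vanish and `α ν(S ∩ A α) ≤ μ(S ∩ A α)`, so `μ S = ∫_S f dν`; lower continuity extends this
from the `S ∩ Uₙ` to `S`. For uniqueness: if `g ≤ p < q ≤ f` on `S ⊆ Uₙ` then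
`q ν(S) ≤ μ(S) ≤ p ν(S)`, so `ν(S) = 0`, and null-additivity with lower continuity makes the
countable union of these sets null.
-/

open MeasureTheory Filter Set
open scoped NNReal ENNReal NNRat

variable {U : Type*}

/-- The Choquet integral of `f` w.r.t. the set function `ν` on the set `A`:
`∫₀^∞ ν({f ≥ t} ∩ A) dt`. -/
noncomputable def Choquet [MeasurableSpace U] (ν : Set U → ENNReal) (f : U → ENNReal)
    (A : Set U) : ENNReal :=
  ∫⁻ t in Set.Ioi (0 : ℝ), ν ({x | ENNReal.ofReal t ≤ f x} ∩ A)

/-- A monotone measure: vanishes at `∅` and is monotone on measurable sets. -/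
def IsMonotoneMeasure [MeasurableSpace U] (ν : Set U → ENNReal) : Prop :=
  ν ∅ = 0 ∧ ∀ A B : Set U, MeasurableSet A → MeasurableSet B → A ⊆ B → ν A ≤ ν B

/-- The decomposition inequalities for the ordered pair `(μ, ν)` w.r.t. a family
`A : NNRat → Set U`, stated additively (no truncated subtraction):
`α(ν(S∩A_α) − ν(S∩A_β)) ≤ μ(S∩A_α) − μ(S∩A_β) ≤ β(ν(S∩A_α) − ν(S∩A_β))`
for all measurable `S` of finite `μ`- and `ν`-measure and rationals `α < β`. -/
def DecompIneq [MeasurableSpace U] (μ ν : Set U → ENNReal) (A : NNRat → Set U) : Prop :=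
  ∀ S : Set U, MeasurableSet S → μ S ≠ ⊤ → ν S ≠ ⊤ →
    ∀ α β : NNRat, α < β →
      (((α : ℝ≥0) : ENNReal) * ν (S ∩ A α) + μ (S ∩ A β)
          ≤ μ (S ∩ A α) + ((α : ℝ≥0) : ENNReal) * ν (S ∩ A β)) ∧
      (μ (S ∩ A α) + ((β : ℝ≥0) : ENNReal) * ν (S ∩ A β)
          ≤ ((β : ℝ≥0) : ENNReal) * ν (S ∩ A α) + μ (S ∩ A β))

/-- The decomposition property: a decreasing family of measurable sets with `A 0 = univ`
satisfying the decomposition inequalities. -/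
def DecompProp [MeasurableSpace U] (μ ν : Set U → ENNReal) (A : NNRat → Set U) : Prop :=
  (∀ α, MeasurableSet (A α)) ∧ A 0 = Set.univ ∧ Antitone A ∧ DecompIneq μ ν A

/-- Comonotonicity for `ℝ≥0∞`-valued functions. -/
def Comonotone (f g : U → ENNReal) : Prop :=
  ∀ s t : U, (f s ≤ f t ∧ g s ≤ g t) ∨ (f t ≤ f s ∧ g t ≤ g s)

open Topology

section SetFunction

variable [MeasurableSpace U] {ν : Set U → ℝ≥0∞}

def IsLowerContinuous (ν : Set U → ℝ≥0∞) : Prop :=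
  ∀ A : ℕ → Set U, (∀ n, MeasurableSet (A n)) → Monotone A →
    Tendsto (fun n => ν (A n)) atTop (nhds (ν (⋃ n, A n)))

def IsNullAdditive (ν : Set U → ℝ≥0∞) : Prop :=
  ∀ A N : Set U, MeasurableSet A → MeasurableSet N → ν N = 0 → ν (A ∪ N) = ν A

theorem IsMonotoneMeasure.mono (hν : IsMonotoneMeasure ν) {A B : Set U} (hA : MeasurableSet A)
    (hB : MeasurableSet B) (hAB : A ⊆ B) : ν A ≤ ν B :=
  hν.2 A B hA hB hAB

theorem IsLowerContinuous.apply_iUnion_eq_iSup (hlc : IsLowerContinuous ν)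
    (hν : IsMonotoneMeasure ν) {A : ℕ → Set U} (hA : ∀ n, MeasurableSet (A n))
    (hmono : Monotone A) : ν (⋃ n, A n) = ⨆ n, ν (A n) :=
  tendsto_nhds_unique (hlc A hA hmono)
    (tendsto_atTop_iSup fun _ _ h => hν.mono (hA _) (hA _) (hmono h))

theorem IsNullAdditive.apply_iUnion_nat_eq_zero (hna : IsNullAdditive ν)
    (hlc : IsLowerContinuous ν) {B : ℕ → Set U} (hB : ∀ n, MeasurableSet (B n))
    (h0 : ∀ n, ν (B n) = 0) : ν (⋃ n, B n) = 0 := by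
  have hacc : ∀ n, MeasurableSet (accumulate B n) := fun n =>
    MeasurableSet.biUnion (to_countable _) fun i _ => hB i
  have hacc0 : ∀ n, ν (accumulate B n) = 0 := by
    intro n
    induction n with
    | zero => simpa [accumulate] using h0 0
    | succ n ih => rw [accumulate_succ, hna _ _ (hacc n) (hB _) (h0 _), ih]
  have h := hlc _ hacc monotone_accumulate
  simp only [hacc0, iUnion_accumulate] at h
  exact tendsto_nhds_unique h tendsto_const_nhds

theorem IsNullAdditive.apply_iUnion_eq_zero (hna : IsNullAdditive ν)
    (hlc : IsLowerContinuous ν) (hν0 : ν ∅ = 0) {ι : Type*} [Countable ι] {B : ι → Set U}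
    (hB : ∀ i, MeasurableSet (B i)) (h0 : ∀ i, ν (B i) = 0) : ν (⋃ i, B i) = 0 := by
  rcases isEmpty_or_nonempty ι with hι | hι
  · simpa using hν0
  · obtain ⟨e, he⟩ := exists_surjective_nat ι
    rw [← he.iUnion_comp B]
    exact hna.apply_iUnion_nat_eq_zero hlc (fun n => hB (e n)) fun n => h0 (e n)

end SetFunction

theorem NNRat.eq_of_abs_sub_le_mul_sub {D ψ : ℚ≥0 → ℝ}
    (hD : ∀ α β : ℚ≥0, α ≤ β → |D β - D α| ≤ ((β : ℝ) - α) * (ψ α - ψ β)) (x : ℚ≥0) :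
    D x = D 0 := by
  have hmesh : ∀ k : ℕ, k ≠ 0 → |D x - D 0| ≤ x * (ψ 0 - ψ x) / k := by
    intro k hk
    set a : ℕ → ℚ≥0 := fun i => x * i / k with ha
    have hstep : ∀ i, |D (a (i + 1)) - D (a i)| ≤ x / k * (ψ (a i) - ψ (a (i + 1))) := by
      intro i
      have hle : a i ≤ a (i + 1) := by simp only [ha]; gcongr; simp
      have hgap : (a (i + 1) : ℝ) - a i = x / k := by simp only [ha]; push_cast; ring
      simpa only [hgap] using hD _ _ hle
    have hsum : ∀ m, |D (a m) - D 0| ≤ x / k * (ψ 0 - ψ (a m)) := by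
      intro m
      induction m with
      | zero => simp [ha]
      | succ m ih =>
        calc |D (a (m + 1)) - D 0| ≤ |D (a (m + 1)) - D (a m)| + |D (a m) - D 0| :=
              abs_sub_le _ _ _
          _ ≤ x / k * (ψ (a m) - ψ (a (m + 1))) + x / k * (ψ 0 - ψ (a m)) :=
              add_le_add (hstep m) ih
          _ = x / k * (ψ 0 - ψ (a (m + 1))) := by ring
    have hak : a k = x := by simp [ha, hk]
    simpa [hak, div_mul_eq_mul_div] using hsum k
  have hlim := tendsto_const_div_atTop_nhds_zero_nat ((x : ℝ) * (ψ 0 - ψ x))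
  have hle : |D x - D 0| ≤ 0 := ge_of_tendsto hlim ((eventually_ne_atTop 0).mono hmesh)
  exact sub_eq_zero.1 (abs_nonpos_iff.1 hle)

theorem NNRat.add_eq_of_increment_bounds {φ ψ I : ℚ≥0 → ℝ}
    (hφ : ∀ α β : ℚ≥0, α < β →
      α * (ψ α - ψ β) ≤ φ α - φ β ∧ φ α - φ β ≤ β * (ψ α - ψ β))
    (hI : ∀ α β : ℚ≥0, α ≤ β →
      ((β : ℝ) - α) * ψ β ≤ I β - I α ∧ I β - I α ≤ ((β : ℝ) - α) * ψ α) (x : ℚ≥0) :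
    φ x + I x = φ 0 + I 0 + x * ψ x := by
  have h := NNRat.eq_of_abs_sub_le_mul_sub (D := fun γ => φ γ + I γ - γ * ψ γ)
    (ψ := ψ) (fun α β hαβ => ?_) x
  · simp only [NNRat.cast_zero, zero_mul, sub_zero] at h
    linarith
  obtain ⟨hI₁, hI₂⟩ := hI α β hαβ
  rcases hαβ.eq_or_lt with rfl | hlt
  · simp
  obtain ⟨hφ₁, hφ₂⟩ := hφ α β hlt
  rw [abs_le]
  constructor <;> linarith

section Choquet

variable [MeasurableSpace U] {ν : Set U → ℝ≥0∞} {f : U → ℝ≥0∞} {S : Set U}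

theorem antitone_measure_levelSet_inter (hν : IsMonotoneMeasure ν) (hf : Measurable f)
    (hS : MeasurableSet S) :
    Antitone fun t : ℝ => ν ({x | ENNReal.ofReal t ≤ f x} ∩ S) := fun _ _ hst =>
  hν.mono ((hf measurableSet_Ici).inter hS) ((hf measurableSet_Ici).inter hS)
    (inter_subset_inter_left _ fun _ hx => (ENNReal.ofReal_le_ofReal hst).trans hx)

theorem mul_measure_le_choquet {c : ℝ} (hc : ∀ x ∈ S, ENNReal.ofReal c ≤ f x) :
    ν S * ENNReal.ofReal c ≤ Choquet ν f S := by
  calc ν S * ENNReal.ofReal c = ∫⁻ _ in Ioc 0 c, ν S := by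
        rw [setLIntegral_const, Real.volume_Ioc, sub_zero]
    _ = ∫⁻ t in Ioc 0 c, ν ({x | ENNReal.ofReal t ≤ f x} ∩ S) := by
        refine setLIntegral_congr_fun measurableSet_Ioc fun t ht => ?_
        have hsub : S ⊆ {x | ENNReal.ofReal t ≤ f x} := fun x hx =>
          (ENNReal.ofReal_le_ofReal ht.2).trans (hc x hx)
        rw [inter_eq_self_of_subset_right hsub]
    _ ≤ Choquet ν f S := lintegral_mono_set Ioc_subset_Ioi_self

theorem choquet_le_mul_measure (hν : IsMonotoneMeasure ν) (hf : Measurable f)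
    (hS : MeasurableSet S) {c : ℝ} (hc : ∀ x ∈ S, f x ≤ ENNReal.ofReal c) :
    Choquet ν f S ≤ ν S * ENNReal.ofReal c := by
  calc Choquet ν f S ≤ ∫⁻ t in Ioi 0, (Iic c).indicator (fun _ => ν S) t := by
        refine setLIntegral_mono' measurableSet_Ioi fun t (ht0 : 0 < t) => ?_
        by_cases ht : t ≤ c
        · rw [indicator_of_mem (show t ∈ Iic c from ht)]
          exact hν.mono ((hf measurableSet_Ici).inter hS) hS inter_subset_right
        · have hempty : {x | ENNReal.ofReal t ≤ f x} ∩ S = ∅ := by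
            refine eq_empty_of_forall_notMem fun x ⟨htx, hx⟩ => ht ?_
            have := ENNReal.ofReal_le_ofReal_iff'.1 (htx.trans (hc x hx))
            exact this.resolve_right ht0.not_ge
          rw [hempty, hν.1]
          exact zero_le
    _ = ν S * ENNReal.ofReal c := by
        rw [lintegral_indicator_const measurableSet_Iic, Measure.restrict_apply measurableSet_Iic,
          Iic_inter_Ioi, Real.volume_Ioc, sub_zero]

theorem choquet_iUnion_eq_iSup (hν : IsMonotoneMeasure ν) (hlc : IsLowerContinuous ν)
    (hf : Measurable f) {S : ℕ → Set U} (hS : ∀ n, MeasurableSet (S n)) (hmono : Monotone S) :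
    Choquet ν f (⋃ n, S n) = ⨆ n, Choquet ν f (S n) := by
  have hlevel : ∀ t : ℝ, ν ({x | ENNReal.ofReal t ≤ f x} ∩ ⋃ n, S n)
      = ⨆ n, ν ({x | ENNReal.ofReal t ≤ f x} ∩ S n) := fun t => by
    rw [inter_iUnion]
    exact hlc.apply_iUnion_eq_iSup hν (fun n => (hf measurableSet_Ici).inter (hS n))
      fun _ _ h => inter_subset_inter_right _ (hmono h)
  simp only [Choquet, hlevel]
  refine lintegral_iSup (fun n => (antitone_measure_levelSet_inter hν hf (hS n)).measurable)
    fun m n h t => ?_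
  exact hν.mono ((hf measurableSet_Ici).inter (hS m)) ((hf measurableSet_Ici).inter (hS n))
    (inter_subset_inter_right _ (hmono h))

end Choquet

section LevelSup

variable {A : ℚ≥0 → Set U} {α β : ℚ≥0} {x : U}

noncomputable def levelSup (A : ℚ≥0 → Set U) (x : U) : ℝ≥0∞ :=
  ⨆ α : ℚ≥0, (A α).indicator (fun _ => ((α : ℝ≥0) : ℝ≥0∞)) x

theorem measurable_levelSup [MeasurableSpace U] (hA : ∀ α, MeasurableSet (A α)) :
    Measurable (levelSup A) :=
  Measurable.iSup fun α => measurable_const.indicator (hA α)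

theorem le_levelSup (hx : x ∈ A α) : ((α : ℝ≥0) : ℝ≥0∞) ≤ levelSup A x :=
  le_iSup_of_le α (by simp [indicator_of_mem hx])

theorem mem_of_lt_levelSup (hA : Antitone A) (h : ((α : ℝ≥0) : ℝ≥0∞) < levelSup A x) :
    x ∈ A α := by
  obtain ⟨β, hβ⟩ := lt_iSup_iff.1 h
  by_cases hx : x ∈ A β
  · rw [indicator_of_mem hx] at hβ
    exact hA (by exact_mod_cast hβ.le) hx
  · simp [indicator_of_notMem hx] at hβ

theorem setOf_ofReal_le_levelSup_subset (hA : Antitone A) {t : ℝ} (ht : (α : ℝ) < t) :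
    {x | ENNReal.ofReal t ≤ levelSup A x} ⊆ A α := fun _ hx =>
  mem_of_lt_levelSup hA <| lt_of_lt_of_le (by
    rwa [← ENNReal.ofReal_coe_nnreal,
      ENNReal.ofReal_lt_ofReal_iff (α.cast_nonneg.trans_lt ht)]) hx

theorem subset_setOf_ofReal_le_levelSup {t : ℝ} (ht : t ≤ β) :
    A β ⊆ {x | ENNReal.ofReal t ≤ levelSup A x} := fun _ hx =>
  le_trans (by rw [← ENNReal.ofReal_coe_nnreal]; exact ENNReal.ofReal_le_ofReal ht)
    (le_levelSup hx)

theorem setOf_levelSup_eq_top_subset (hA : Antitone A) (α : ℚ≥0) :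
    {x | levelSup A x = ⊤} ⊆ A α := fun _ hx =>
  mem_of_lt_levelSup hA (hx ▸ ENNReal.coe_lt_top)

variable [MeasurableSpace U] {ν : Set U → ℝ≥0∞} {S : Set U}

theorem setLIntegral_Ioc_levelSup_bounds (hν : IsMonotoneMeasure ν)
    (hAm : ∀ α, MeasurableSet (A α)) (hA : Antitone A) (hS : MeasurableSet S) (α β : ℚ≥0) :
    ν (S ∩ A β) * ENNReal.ofReal (β - α)
        ≤ ∫⁻ t in Ioc (α : ℝ) β, ν ({x | ENNReal.ofReal t ≤ levelSup A x} ∩ S) ∧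
      ∫⁻ t in Ioc (α : ℝ) β, ν ({x | ENNReal.ofReal t ≤ levelSup A x} ∩ S)
        ≤ ν (S ∩ A α) * ENNReal.ofReal (β - α) := by
  have hlevel : ∀ t : ℝ, MeasurableSet ({x | ENNReal.ofReal t ≤ levelSup A x} ∩ S) := fun t =>
    (measurable_levelSup hAm measurableSet_Ici).inter hS
  constructor
  · calc ν (S ∩ A β) * ENNReal.ofReal (β - α) = ∫⁻ _ in Ioc (α : ℝ) β, ν (S ∩ A β) := by
          rw [setLIntegral_const, Real.volume_Ioc]
      _ ≤ _ := setLIntegral_mono' measurableSet_Ioc fun t ht =>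
          hν.mono (hS.inter (hAm β)) (hlevel t) fun x hx =>
            ⟨subset_setOf_ofReal_le_levelSup ht.2 hx.2, hx.1⟩
  · calc _ ≤ ∫⁻ _ in Ioc (α : ℝ) β, ν (S ∩ A α) :=
          setLIntegral_mono' measurableSet_Ioc fun t ht =>
            hν.mono (hlevel t) (hS.inter (hAm α)) fun x hx =>
              ⟨hx.2, setOf_ofReal_le_levelSup_subset hA ht.1 hx.1⟩
      _ = ν (S ∩ A α) * ENNReal.ofReal (β - α) := by
          rw [setLIntegral_const, Real.volume_Ioc]

end LevelSup

section Decomposition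

variable [MeasurableSpace U] {μ ν : Set U → ℝ≥0∞} {A : ℚ≥0 → Set U} {S : Set U}

theorem DecompIneq.mul_le (hd : DecompIneq μ ν A) (hS : MeasurableSet S) (hSμ : μ S ≠ ⊤)
    (hSν : ν S ≠ ⊤) (hνtail : Tendsto (fun β => ν (S ∩ A β)) atTop (𝓝 0)) (α : ℚ≥0) :
    ((α : ℝ≥0) : ℝ≥0∞) * ν (S ∩ A α) ≤ μ (S ∩ A α) := by
  have hlim : Tendsto (fun β => μ (S ∩ A α) + ((α : ℝ≥0) : ℝ≥0∞) * ν (S ∩ A β)) atTop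
      (𝓝 (μ (S ∩ A α))) := by
    simpa using tendsto_const_nhds.add (ENNReal.Tendsto.const_mul hνtail (.inr ENNReal.coe_ne_top))
  exact ge_of_tendsto hlim <| (eventually_gt_atTop α).mono fun β hβ =>
    le_self_add.trans (hd S hS hSμ hSν α β hβ).1

theorem DecompIneq.toReal (hd : DecompIneq μ ν A) (hS : MeasurableSet S) (hSμ : μ S ≠ ⊤)
    (hSν : ν S ≠ ⊤) (hμS : ∀ γ, μ (S ∩ A γ) ≠ ⊤) (hνS : ∀ γ, ν (S ∩ A γ) ≠ ⊤) {α β : ℚ≥0}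
    (h : α < β) :
    (α : ℝ) * ((ν (S ∩ A α)).toReal - (ν (S ∩ A β)).toReal)
        ≤ (μ (S ∩ A α)).toReal - (μ (S ∩ A β)).toReal ∧
      (μ (S ∩ A α)).toReal - (μ (S ∩ A β)).toReal
        ≤ (β : ℝ) * ((ν (S ∩ A α)).toReal - (ν (S ∩ A β)).toReal) := by
  have hmul : ∀ γ δ : ℚ≥0, ((γ : ℝ≥0) : ℝ≥0∞) * ν (S ∩ A δ) ≠ ⊤ := fun γ δ =>
    ENNReal.mul_ne_top ENNReal.coe_ne_top (hνS δ)
  obtain ⟨h₁, h₂⟩ := hd S hS hSμ hSν α β h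
  have e₁ := ENNReal.toReal_mono (ENNReal.add_ne_top.2 ⟨hμS α, hmul α β⟩) h₁
  have e₂ := ENNReal.toReal_mono (ENNReal.add_ne_top.2 ⟨hmul β α, hμS β⟩) h₂
  simp only [ENNReal.toReal_add (hmul _ _) (hμS _), ENNReal.toReal_add (hμS _) (hmul _ _),
    ENNReal.toReal_mul, ENNReal.coe_toReal] at e₁ e₂
  rw [show ((α : ℝ≥0) : ℝ) = α from rfl] at e₁
  rw [show ((β : ℝ≥0) : ℝ) = β from rfl] at e₂
  constructor <;> linarith

theorem toReal_setLIntegral_Ioc_levelSup_bounds (hν : IsMonotoneMeasure ν)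
    (hAm : ∀ α, MeasurableSet (A α)) (hA : Antitone A) (hS : MeasurableSet S)
    (hνS : ∀ γ, ν (S ∩ A γ) ≠ ⊤) {α β : ℚ≥0} (h : α ≤ β) :
    ((β : ℝ) - α) * (ν (S ∩ A β)).toReal
        ≤ (∫⁻ t in Ioc 0 (β : ℝ), ν ({x | ENNReal.ofReal t ≤ levelSup A x} ∩ S)).toReal
          - (∫⁻ t in Ioc 0 (α : ℝ), ν ({x | ENNReal.ofReal t ≤ levelSup A x} ∩ S)).toReal ∧
      (∫⁻ t in Ioc 0 (β : ℝ), ν ({x | ENNReal.ofReal t ≤ levelSup A x} ∩ S)).toReal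
          - (∫⁻ t in Ioc 0 (α : ℝ), ν ({x | ENNReal.ofReal t ≤ levelSup A x} ∩ S)).toReal
        ≤ ((β : ℝ) - α) * (ν (S ∩ A α)).toReal := by
  set G : ℝ → ℝ≥0∞ := fun t => ν ({x | ENNReal.ofReal t ≤ levelSup A x} ∩ S)
  have hJ := setLIntegral_Ioc_levelSup_bounds hν hAm hA hS
  have hJfin : ∀ γ δ : ℚ≥0, ∫⁻ t in Ioc (γ : ℝ) δ, G t ≠ ⊤ := fun γ δ =>
    ne_top_of_le_ne_top (ENNReal.mul_ne_top (hνS γ) ENNReal.ofReal_ne_top) (hJ γ δ).2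
  have hsplit : ∫⁻ t in Ioc 0 (β : ℝ), G t
      = (∫⁻ t in Ioc 0 (α : ℝ), G t) + ∫⁻ t in Ioc (α : ℝ) β, G t := by
    rw [← lintegral_union measurableSet_Ioc (Ioc_disjoint_Ioc_of_le le_rfl),
      Ioc_union_Ioc_eq_Ioc α.cast_nonneg (by exact_mod_cast h)]
  have hgap : (ENNReal.ofReal ((β : ℝ) - α)).toReal = (β : ℝ) - α :=
    ENNReal.toReal_ofReal (sub_nonneg.2 (by exact_mod_cast h))
  have e₁ := ENNReal.toReal_mono (hJfin α β) (hJ α β).1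
  have e₂ := ENNReal.toReal_mono (ENNReal.mul_ne_top (hνS α) ENNReal.ofReal_ne_top) (hJ α β).2
  rw [ENNReal.toReal_mul, hgap] at e₁ e₂
  rw [hsplit, ENNReal.toReal_add (by simpa using hJfin 0 α) (hJfin α β)]
  constructor <;> linarith

theorem DecompProp.add_setLIntegral_eq (hμ : IsMonotoneMeasure μ) (hν : IsMonotoneMeasure ν)
    (hd : DecompProp μ ν A) (hS : MeasurableSet S) (hSμ : μ S ≠ ⊤) (hSν : ν S ≠ ⊤)
    (α : ℚ≥0) :
    μ (S ∩ A α) + ∫⁻ t in Ioc 0 (α : ℝ), ν ({x | ENNReal.ofReal t ≤ levelSup A x} ∩ S)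
      = μ S + ((α : ℝ≥0) : ℝ≥0∞) * ν (S ∩ A α) := by
  obtain ⟨hAm, hA0, hA, hdec⟩ := hd
  have hμS : ∀ γ, μ (S ∩ A γ) ≠ ⊤ := fun γ =>
    ne_top_of_le_ne_top hSμ (hμ.mono (hS.inter (hAm γ)) hS inter_subset_left)
  have hνS : ∀ γ, ν (S ∩ A γ) ≠ ⊤ := fun γ =>
    ne_top_of_le_ne_top hSν (hν.mono (hS.inter (hAm γ)) hS inter_subset_left)
  have hIfin : ∫⁻ t in Ioc 0 (α : ℝ), ν ({x | ENNReal.ofReal t ≤ levelSup A x} ∩ S) ≠ ⊤ := by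
    simpa using ne_top_of_le_ne_top (ENNReal.mul_ne_top (hνS 0) ENNReal.ofReal_ne_top)
      (setLIntegral_Ioc_levelSup_bounds hν hAm hA hS 0 α).2
  have key := NNRat.add_eq_of_increment_bounds (φ := fun γ => (μ (S ∩ A γ)).toReal)
    (ψ := fun γ => (ν (S ∩ A γ)).toReal)
    (I := fun γ => (∫⁻ t in Ioc 0 (γ : ℝ), ν ({x | ENNReal.ofReal t ≤ levelSup A x} ∩ S)).toReal)
    (fun _ _ h => hdec.toReal hS hSμ hSν hμS hνS h)
    (fun _ _ h => toReal_setLIntegral_Ioc_levelSup_bounds hν hAm hA hS hνS h) α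
  simp only [hA0, inter_univ, NNRat.cast_zero, Ioc_self, Measure.restrict_empty,
    lintegral_zero_measure, ENNReal.toReal_zero, add_zero] at key
  rw [← ENNReal.toReal_eq_toReal_iff' (ENNReal.add_ne_top.2 ⟨hμS α, hIfin⟩)
    (ENNReal.add_ne_top.2 ⟨hSμ, ENNReal.mul_ne_top ENNReal.coe_ne_top (hνS α)⟩),
    ENNReal.toReal_add (hμS α) hIfin,
    ENNReal.toReal_add hSμ (ENNReal.mul_ne_top ENNReal.coe_ne_top (hνS α)), ENNReal.toReal_mul]
  exact key

theorem DecompProp.measure_eq_choquet (hμ : IsMonotoneMeasure μ) (hν : IsMonotoneMeasure ν)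
    (hd : DecompProp μ ν A) (hS : MeasurableSet S) (hSμ : μ S ≠ ⊤) (hSν : ν S ≠ ⊤)
    (hμtail : Tendsto (fun α => μ (S ∩ A α)) atTop (𝓝 0))
    (hνtail : Tendsto (fun α => ν (S ∩ A α)) atTop (𝓝 0)) :
    μ S = Choquet ν (levelSup A) S := by
  have hμseq := hμtail.comp (tendsto_natCast_atTop_atTop (R := ℚ≥0))
  have hintegral : Tendsto (fun n : ℕ => ∫⁻ t in Ioc 0 ((n : ℚ≥0) : ℝ),
      ν ({x | ENNReal.ofReal t ≤ levelSup A x} ∩ S)) atTop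
      (𝓝 (Choquet ν (levelSup A) S)) := by
    have h := tendsto_measure_iUnion_atTop
      (μ := volume.withDensity fun t => ν ({x | ENNReal.ofReal t ≤ levelSup A x} ∩ S))
      (s := fun n : ℕ => Ioc 0 (n : ℝ)) fun _ _ h => Ioc_subset_Ioc_right (by exact_mod_cast h)
    rw [iUnion_Ioc_eq_Ioi_self_iff.2 fun x _ => exists_nat_ge x,
      withDensity_apply _ measurableSet_Ioi] at h
    simpa only [Choquet, Function.comp_def, withDensity_apply _ measurableSet_Ioc,
      NNRat.cast_natCast] using h
  have hleft := hμseq.add hintegral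
  have hright : Tendsto (fun n : ℕ => μ S + (((n : ℚ≥0) : ℝ≥0) : ℝ≥0∞) * ν (S ∩ A n)) atTop
      (𝓝 (μ S + 0)) :=
    tendsto_const_nhds.add <| tendsto_of_tendsto_of_tendsto_of_le_of_le tendsto_const_nhds
      hμseq (fun _ => zero_le) fun n => hd.2.2.2.mul_le hS hSμ hSν hνtail n
  simp only [Function.comp_def, zero_add, hd.add_setLIntegral_eq hμ hν hS hSμ hSν] at hleft
  simpa using tendsto_nhds_unique hright hleft

end Decomposition

section Uniqueness

variable [MeasurableSpace U] {ν : Set U → ℝ≥0∞}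

theorem measure_setOf_lt_eq_zero_of_choquet_eq (hν : IsMonotoneMeasure ν)
    (hlc : IsLowerContinuous ν) (hna : IsNullAdditive ν) {Un : ℕ → Set U}
    (hUnm : ∀ n, MeasurableSet (Un n)) (hUn : ⋃ n, Un n = univ) (hνσ : ∀ n, ν (Un n) ≠ ⊤)
    {f g : U → ℝ≥0∞} (hf : Measurable f) (hg : Measurable g)
    (hfg : ∀ S, MeasurableSet S → Choquet ν f S = Choquet ν g S) :
    ν {x | g x < f x} = 0 := by
  let ι := ℕ × {pq : ℚ × ℚ // ENNReal.ofReal pq.1 < ENNReal.ofReal pq.2}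
  let B : ι → Set U := fun i => {x | ENNReal.ofReal i.2.1.2 ≤ f x} ∩
    {x | g x ≤ ENNReal.ofReal i.2.1.1} ∩ Un i.1
  have hB : ∀ i, MeasurableSet (B i) := fun i =>
    ((hf measurableSet_Ici).inter (hg measurableSet_Iic)).inter (hUnm _)
  have hB0 : ∀ i, ν (B i) = 0 := by
    intro i
    by_contra hne
    have hfin : ν (B i) ≠ ⊤ :=
      ne_top_of_le_ne_top (hνσ i.1) (hν.mono (hB i) (hUnm _) inter_subset_right)
    have hle := (mul_measure_le_choquet fun x hx => hx.1.1).trans <|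
      (hfg _ (hB i)).trans_le (choquet_le_mul_measure hν hg (hB i) fun x hx => hx.1.2)
    exact i.2.2.not_ge ((ENNReal.mul_le_mul_iff_right hne hfin).1 hle)
  have hcover : {x | g x < f x} ⊆ ⋃ i, B i := by
    intro x (hx : g x < f x)
    obtain ⟨p, -, hgp, hpf⟩ := ENNReal.lt_iff_exists_rat_btwn.1 hx
    obtain ⟨q, -, hpq, hqf⟩ := ENNReal.lt_iff_exists_rat_btwn.1 hpf
    obtain ⟨n, hn⟩ := mem_iUnion.1 (hUn ▸ mem_univ x)
    exact mem_iUnion.2 ⟨⟨n, ⟨(p, q), hpq⟩⟩, ⟨hqf.le, hgp.le⟩, hn⟩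
  exact le_antisymm ((hν.mono (measurableSet_lt hg hf) (MeasurableSet.iUnion hB) hcover).trans
    (hna.apply_iUnion_eq_zero hlc hν.1 hB hB0).le) zero_le

end Uniqueness

section SigmaFinite

variable [MeasurableSpace U] {ν : Set U → ℝ≥0∞} {Un : ℕ → Set U}

theorem measure_setOf_ne_eq_zero_of_choquet_eq (hν : IsMonotoneMeasure ν)
    (hlc : IsLowerContinuous ν) (hna : IsNullAdditive ν) (hUnm : ∀ n, MeasurableSet (Un n))
    (hUn : ⋃ n, Un n = univ) (hνσ : ∀ n, ν (Un n) ≠ ⊤) {f g : U → ℝ≥0∞} (hf : Measurable f)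
    (hg : Measurable g) (hfg : ∀ S, MeasurableSet S → Choquet ν f S = Choquet ν g S) :
    ν {x | f x ≠ g x} = 0 := by
  have hsplit : {x | f x ≠ g x} = {x | g x < f x} ∪ {x | f x < g x} := by
    ext x
    exact ne_iff_lt_or_gt.trans or_comm
  rw [hsplit, hna _ _ (measurableSet_lt hg hf) (measurableSet_lt hf hg)
    (measure_setOf_lt_eq_zero_of_choquet_eq hν hlc hna hUnm hUn hνσ hg hf fun S hS =>
      (hfg S hS).symm)]
  exact measure_setOf_lt_eq_zero_of_choquet_eq hν hlc hna hUnm hUn hνσ hf hg hfg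

theorem IsMonotoneMeasure.tendsto_inter_zero {A : ℚ≥0 → Set U} (hν : IsMonotoneMeasure ν)
    (hAm : ∀ α, MeasurableSet (A α)) {S T : Set U} (hS : MeasurableSet S) (hT : MeasurableSet T)
    (hST : S ⊆ T) (h : Tendsto (fun α => ν (A α ∩ T)) atTop (𝓝 0)) :
    Tendsto (fun α => ν (S ∩ A α)) atTop (𝓝 0) :=
  tendsto_of_tendsto_of_tendsto_of_le_of_le tendsto_const_nhds h (fun _ => zero_le) fun α =>
    hν.mono (hS.inter (hAm α)) ((hAm α).inter hT) fun _ hx => ⟨hx.2, hST hx.1⟩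

theorem measure_setOf_levelSup_eq_top {A : ℚ≥0 → Set U} (hν : IsMonotoneMeasure ν)
    (hlc : IsLowerContinuous ν) (hAm : ∀ α, MeasurableSet (A α)) (hA : Antitone A)
    (hUnm : ∀ n, MeasurableSet (Un n)) (hUnmono : Monotone Un) (hUn : ⋃ n, Un n = univ)
    (htail : ∀ n, Tendsto (fun α => ν (A α ∩ Un n)) atTop (𝓝 0)) :
    ν {x | levelSup A x = ⊤} = 0 := by
  have htop : MeasurableSet {x | levelSup A x = ⊤} :=
    measurable_levelSup hAm (measurableSet_singleton ⊤)
  rw [← inter_univ {x | levelSup A x = ⊤}, ← hUn, inter_iUnion,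
    hlc.apply_iUnion_eq_iSup hν (fun n => htop.inter (hUnm n))
      fun _ _ h => inter_subset_inter_right _ (hUnmono h), ENNReal.iSup_eq_zero]
  refine fun n => le_antisymm (ge_of_tendsto (htail n) (.of_forall fun α => ?_)) zero_le
  exact hν.mono (htop.inter (hUnm n)) ((hAm α).inter (hUnm n))
    (inter_subset_inter_left _ (setOf_levelSup_eq_top_subset hA α))

theorem DecompProp.measure_eq_choquet_of_iUnion_eq_univ {μ : Set U → ℝ≥0∞} {A : ℚ≥0 → Set U}
    (hμ : IsMonotoneMeasure μ) (hν : IsMonotoneMeasure ν) (hμlc : IsLowerContinuous μ)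
    (hνlc : IsLowerContinuous ν) (hd : DecompProp μ ν A) (hUnm : ∀ n, MeasurableSet (Un n))
    (hUnmono : Monotone Un) (hUn : ⋃ n, Un n = univ) (hμσ : ∀ n, μ (Un n) ≠ ⊤)
    (hνσ : ∀ n, ν (Un n) ≠ ⊤) (hμtail : ∀ n, Tendsto (fun α => μ (A α ∩ Un n)) atTop (𝓝 0))
    (hνtail : ∀ n, Tendsto (fun α => ν (A α ∩ Un n)) atTop (𝓝 0)) {S : Set U}
    (hS : MeasurableSet S) : μ S = Choquet ν (levelSup A) S := by
  have hSn : ∀ n, MeasurableSet (S ∩ Un n) := fun n => hS.inter (hUnm n)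
  have hmono : Monotone fun n => S ∩ Un n := fun _ _ h => inter_subset_inter_right _ (hUnmono h)
  rw [← inter_univ S, ← hUn, inter_iUnion, hμlc.apply_iUnion_eq_iSup hμ hSn hmono,
    choquet_iUnion_eq_iSup hν hνlc (measurable_levelSup hd.1) hSn hmono]
  exact iSup_congr fun n => hd.measure_eq_choquet hμ hν (hSn n)
    (ne_top_of_le_ne_top (hμσ n) (hμ.mono (hSn n) (hUnm n) inter_subset_right))
    (ne_top_of_le_ne_top (hνσ n) (hν.mono (hSn n) (hUnm n) inter_subset_right))
    (hμ.tendsto_inter_zero hd.1 (hSn n) (hUnm n) inter_subset_right (hμtail n))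
    (hν.tendsto_inter_zero hd.1 (hSn n) (hUnm n) inter_subset_right (hνtail n))

end SigmaFinite

theorem radon_nikodym_sigma_finite [MeasurableSpace U] (μ ν : Set U → ENNReal)
    (hμ : IsMonotoneMeasure μ) (hν : IsMonotoneMeasure ν)
    (Un : ℕ → Set U) (hUnm : ∀ n, MeasurableSet (Un n)) (hUnmono : Monotone Un)
    (hUn : (⋃ n, Un n) = Set.univ)
    (hμσ : ∀ n, μ (Un n) ≠ ⊤) (hνσ : ∀ n, ν (Un n) ≠ ⊤)
    (hμlc : ∀ A : ℕ → Set U, (∀ n, MeasurableSet (A n)) → Monotone A →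
      Tendsto (fun n => μ (A n)) atTop (nhds (μ (⋃ n, A n))))
    (hνlc : ∀ A : ℕ → Set U, (∀ n, MeasurableSet (A n)) → Monotone A →
      Tendsto (fun n => ν (A n)) atTop (nhds (ν (⋃ n, A n))))
    (hνna : ∀ A N : Set U, MeasurableSet A → MeasurableSet N →
      ν N = 0 → ν (A ∪ N) = ν A)
    (A : NNRat → Set U) (hd : DecompProp μ ν A)
    (ht : ∀ n, Tendsto (fun α : NNRat => max (μ (A α ∩ Un n)) (ν (A α ∩ Un n)))
      atTop (nhds 0)) :
    ∃ f : U → ENNReal, Measurable f ∧ ν {x | f x = ⊤} = 0 ∧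
      (∀ S : Set U, MeasurableSet S → μ S = Choquet ν f S) ∧
      ∀ g : U → ENNReal, Measurable g →
        (∀ S : Set U, MeasurableSet S → μ S = Choquet ν g S) →
        ν {x | f x ≠ g x} = 0 := by
  have hμtail : ∀ n, Tendsto (fun α => μ (A α ∩ Un n)) atTop (𝓝 0) := fun n =>
    tendsto_of_tendsto_of_tendsto_of_le_of_le tendsto_const_nhds (ht n) (fun _ => zero_le)
      fun _ => le_max_left _ _
  have hνtail : ∀ n, Tendsto (fun α => ν (A α ∩ Un n)) atTop (𝓝 0) := fun n =>
    tendsto_of_tendsto_of_tendsto_of_le_of_le tendsto_const_nhds (ht n) (fun _ => zero_le)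
      fun _ => le_max_right _ _
  have hrep : ∀ S, MeasurableSet S → μ S = Choquet ν (levelSup A) S := fun S hS =>
    hd.measure_eq_choquet_of_iUnion_eq_univ hμ hν hμlc hνlc hUnm hUnmono hUn hμσ hνσ hμtail
      hνtail hS
  refine ⟨levelSup A, measurable_levelSup hd.1,
    measure_setOf_levelSup_eq_top hν hνlc hd.1 hd.2.2.1 hUnm hUnmono hUn hνtail, hrep,
    fun g hg hgrep => ?_⟩
  exact measure_setOf_ne_eq_zero_of_choquet_eq hν hνlc hνna hUnm hUn hνσ
    (measurable_levelSup hd.1) hg fun S hS => (hrep S hS).symm.trans (hgrep S hS)
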